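/- Let b, x_1, x_2, x_3, x_4 be i.i.d. uniform bits and define the random 4-tuple E = (x_2 b + b x_1, x_2 b + b x_3, x_3 b + b x_4, b) over GF(2). Then the Shannon entropy of E in bits equals 5/2; that is, −Σ_{e ∈ {0,1}^4} Pr[E = e] · log₂ Pr[E = e] = 5/2 (with the convention 0 · log₂ 0 = 0). -/

import Mathlib

/-!
If `b = 0` the error tuple is `0`, which accounts for half of the mass. If `b = 1` it is
`(x₁ + x₂, x₂ + x₃, x₃ + x₄, 1)`, the image of `(x₁, …, x₄)` under a surjective linear map
onto the eight tuples ending in `1` whose kernel is `{0, (1, 1, 1, 1)}`; so each of them has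
probability `1/16`. The entropy is therefore `(1/2) · 1 + 8 · (1/16) · 4 = 5/2`.
-/

/-- The distribution of the LF2 error 4-tuple
`E = (x₂b + bx₁, x₂b + bx₃, x₃b + bx₄, b)` where `b, x₁, x₂, x₃, x₄` are i.i.d. uniform
bits (here `q = (b, x₁, x₂, x₃, x₄)`). -/
noncomputable def lf2ErrorDist : PMF (ZMod 2 × ZMod 2 × ZMod 2 × ZMod 2) :=
  PMF.map
    (fun q : ZMod 2 × ZMod 2 × ZMod 2 × ZMod 2 × ZMod 2 =>
      (q.2.2.1 * q.1 + q.1 * q.2.1,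
       q.2.2.1 * q.1 + q.1 * q.2.2.2.1,
       q.2.2.2.1 * q.1 + q.1 * q.2.2.2.2,
       q.1))
    (PMF.uniformOfFintype (ZMod 2 × ZMod 2 × ZMod 2 × ZMod 2 × ZMod 2))

open Finset Real

namespace PMF

variable {α β : Type*} [Fintype α] [Nonempty α] [DecidableEq β]

theorem map_uniformOfFintype_apply (f : α → β) (b : β) :
    (uniformOfFintype α).map f b = #{a | f a = b} / Fintype.card α := by
  simp [tsum_fintype, sum_ite, eq_comm, div_eq_mul_inv]

theorem toReal_map_uniformOfFintype_apply (f : α → β) (b : β) :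
    ((uniformOfFintype α).map f b).toReal = #{a | f a = b} / Fintype.card α := by
  rw [map_uniformOfFintype_apply, ENNReal.toReal_div]
  simp

end PMF

theorem neg_inv_two_pow_mul_logb_two (n : ℕ) :
    -(((2 : ℝ) ^ n)⁻¹ * logb 2 (2 ^ n)⁻¹) = n / 2 ^ n := by
  rw [logb_inv, logb_pow, logb_self_eq_one one_lt_two]
  ring

def lf2Error (q : ZMod 2 × ZMod 2 × ZMod 2 × ZMod 2 × ZMod 2) :
    ZMod 2 × ZMod 2 × ZMod 2 × ZMod 2 :=
  (q.2.2.1 * q.1 + q.1 * q.2.1,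
   q.2.2.1 * q.1 + q.1 * q.2.2.2.1,
   q.2.2.2.1 * q.1 + q.1 * q.2.2.2.2,
   q.1)

theorem lf2ErrorDist_eq_map : lf2ErrorDist = (PMF.uniformOfFintype _).map lf2Error := rfl

theorem card_lf2Error_fiber (e : ZMod 2 × ZMod 2 × ZMod 2 × ZMod 2) :
    #{q | lf2Error q = e} = if e = 0 then 16 else if e.2.2.2 = 1 then 2 else 0 := by
  revert e
  decide

theorem lf2ErrorDist_toReal_apply (e : ZMod 2 × ZMod 2 × ZMod 2 × ZMod 2) :
    (lf2ErrorDist e).toReal =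
      if e = 0 then (2 ^ 1)⁻¹ else if e.2.2.2 = 1 then (2 ^ 4)⁻¹ else 0 := by
  rw [lf2ErrorDist_eq_map, PMF.toReal_map_uniformOfFintype_apply, card_lf2Error_fiber]
  split_ifs <;> norm_num [Fintype.card_prod]

theorem neg_mul_logb_lf2ErrorDist (e : ZMod 2 × ZMod 2 × ZMod 2 × ZMod 2) :
    -((lf2ErrorDist e).toReal * logb 2 (lf2ErrorDist e).toReal) =
      if e = 0 then 1 / 2 else if e.2.2.2 = 1 then 1 / 4 else 0 := by
  rw [lf2ErrorDist_toReal_apply]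
  split_ifs
  · rw [neg_inv_two_pow_mul_logb_two]; norm_num
  · rw [neg_inv_two_pow_mul_logb_two]; norm_num
  · simp

/-- The Shannon entropy (in bits) of the error tuple `E` equals `5/2`:
`−Σ_e Pr[E = e] · log₂ Pr[E = e] = 5/2` (with the convention `0 · log₂ 0 = 0`). -/
theorem lf2_error_entropy :
    -∑ e : ZMod 2 × ZMod 2 × ZMod 2 × ZMod 2,
        (lf2ErrorDist e).toReal * Real.logb 2 (lf2ErrorDist e).toReal = 5 / 2 := by
  rw [← sum_neg_distrib]
  simp only [neg_mul_logb_lf2ErrorDist, sum_ite, filter_filter, sum_const, nsmul_eq_mul]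
  have h_zero : #{e : ZMod 2 × ZMod 2 × ZMod 2 × ZMod 2 | e = 0} = 1 := by decide
  have h_last : #{e : ZMod 2 × ZMod 2 × ZMod 2 × ZMod 2 | e ≠ 0 ∧ e.2.2.2 = 1} = 8 := by decide
  rw [h_zero, h_last]
  norm_num
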